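/- Let n : ℕ, let f : EuclideanSpace ℝ (Fin n) → ℝ be differentiable with L-Lipschitz gradient (L ≥ 0), let S be a finite set of coordinates, and let (Ω, μ) be a probability space. Let g : Ω → EuclideanSpace ℝ (Fin n) with ω ↦ (g ω)∣S integrable, ω ↦ ‖(g ω)∣S‖^2 integrable, and ω ↦ f (x - γₜ • (g ω)∣S) integrable. Let d := ∫ (g ω)∣S ∂μ and assume ∫ ‖(g ω)∣S - d‖^2 ∂μ ≤ σ^2, and the alignment condition ⟪(gradient f x)∣S, d⟫ ≥ α * ‖d‖^2 with α > 0. Then for every γₜ ≥ 0, ∫ f (x - γₜ • (g ω)∣S) ∂μ ≤ f x - γₜ * α * (1 - γₜ * L / (2 * α)) * ‖d‖^2 + (γₜ^2 * L / 2) * σ^2. -/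

import Mathlib

/-!
Apply the descent lemma `f (x + v) ≤ f x + ⟪∇f x, v⟫ + L/2 ‖v‖²` of an `L`-smooth function
pointwise with `v = -γ • (g ω)∣S` and take expectations: the linear term becomes `-γ ⟪∇f x, d⟫`,
and the quadratic one is controlled by the bias–variance decomposition
`E‖(g ω)∣S‖² = E‖(g ω)∣S - d‖² + ‖d‖² ≤ σ² + ‖d‖²`. Since `d` is an integral of masked vectors it is
masked itself, so `⟪∇f x, d⟫ = ⟪(∇f x)∣S, d⟫ ≥ α‖d‖²`.
-/

open MeasureTheory

/-- The masked vector `x∣S`: keeps coordinates in `S`, zeroes out the rest. -/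
def mask {n : ℕ} (S : Finset (Fin n)) (x : EuclideanSpace ℝ (Fin n)) :
    EuclideanSpace ℝ (Fin n) :=
  WithLp.toLp 2 (fun i => if i ∈ S then x i else 0)

open InnerProductSpace
open scoped Gradient

section Mask

variable {n : ℕ} (S : Finset (Fin n))

lemma mask_apply (x : EuclideanSpace ℝ (Fin n)) (i : Fin n) :
    mask S x i = if i ∈ S then x i else 0 := rfl

@[simp]
lemma mask_mask (x : EuclideanSpace ℝ (Fin n)) : mask S (mask S x) = mask S x := by
  ext i
  by_cases hi : i ∈ S <;> simp [mask_apply, hi]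

lemma real_inner_mask_left (x y : EuclideanSpace ℝ (Fin n)) :
    ⟪mask S x, y⟫_ℝ = ⟪x, mask S y⟫_ℝ := by
  simp only [PiLp.inner_apply, RCLike.inner_apply, conj_trivial]
  refine Finset.sum_congr rfl fun i _ => ?_
  by_cases hi : i ∈ S <;> simp [mask_apply, hi]

noncomputable def maskCLM : EuclideanSpace ℝ (Fin n) →L[ℝ] EuclideanSpace ℝ (Fin n) :=
  LinearMap.toContinuousLinearMap
    { toFun := mask S
      map_add' := fun x y => by ext i; by_cases hi : i ∈ S <;> simp [mask_apply, hi]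
      map_smul' := fun c x => by ext i; by_cases hi : i ∈ S <;> simp [mask_apply, hi] }

lemma integral_mask {Ω : Type*} [MeasurableSpace Ω] {μ : Measure Ω}
    {u : Ω → EuclideanSpace ℝ (Fin n)} (hu : Integrable u μ) :
    ∫ ω, mask S (u ω) ∂μ = mask S (∫ ω, u ω ∂μ) :=
  (maskCLM S).integral_comp_comm hu

end Mask

section Smooth

variable {E : Type*} [NormedAddCommGroup E] [InnerProductSpace ℝ E] [CompleteSpace E]
  {f : E → ℝ} {L : ℝ}

lemma hasDerivAt_apply_add_smul (hf : Differentiable ℝ f) (x v : E) (t : ℝ) :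
    HasDerivAt (fun s : ℝ => f (x + s • v)) ⟪∇ f (x + t • v), v⟫_ℝ t := by
  have hline : HasDerivAt (fun s : ℝ => x + s • v) v t := by
    simpa using ((hasDerivAt_id t).smul_const v).const_add x
  rw [← toDual_apply_apply, toDual_gradient]
  exact (hf _).hasFDerivAt.comp_hasDerivAt t hline

lemma inner_gradient_add_smul_sub_le
    (hlip : ∀ x y, ‖∇ f x - ∇ f y‖ ≤ L * ‖x - y‖) (x v : E) {t : ℝ} (ht : 0 ≤ t) :
    ⟪∇ f (x + t • v) - ∇ f x, v⟫_ℝ ≤ L * t * ‖v‖ ^ 2 :=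
  calc ⟪∇ f (x + t • v) - ∇ f x, v⟫_ℝ ≤ ‖∇ f (x + t • v) - ∇ f x‖ * ‖v‖ := real_inner_le_norm _ _
    _ ≤ L * ‖t • v‖ * ‖v‖ := by
        gcongr
        simpa using hlip (x + t • v) x
    _ = L * t * ‖v‖ ^ 2 := by rw [norm_smul, Real.norm_of_nonneg ht]; ring

lemma apply_add_le_of_lipschitz_gradient (hf : Differentiable ℝ f)
    (hlip : ∀ x y, ‖∇ f x - ∇ f y‖ ≤ L * ‖x - y‖) (x v : E) :
    f (x + v) ≤ f x + ⟪∇ f x, v⟫_ℝ + L / 2 * ‖v‖ ^ 2 := by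
  set h : ℝ → ℝ := fun t => f (x + t • v) - t * ⟪∇ f x, v⟫_ℝ - t ^ 2 * (L / 2 * ‖v‖ ^ 2)
  have hderiv : ∀ t, HasDerivAt h
      (⟪∇ f (x + t • v) - ∇ f x, v⟫_ℝ - L * t * ‖v‖ ^ 2) t := fun t => by
    refine (((hasDerivAt_apply_add_smul hf x v t).sub ((hasDerivAt_id t).mul_const _)).sub
      ((hasDerivAt_pow 2 t).mul_const (L / 2 * ‖v‖ ^ 2))).congr_deriv ?_
    rw [inner_sub_left]
    ring
  have hanti : AntitoneOn h (Set.Icc 0 1) := by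
    refine antitoneOn_of_hasDerivWithinAt_nonpos (convex_Icc 0 1)
      (fun t _ => (hderiv t).continuousAt.continuousWithinAt)
      (fun t _ => (hderiv t).hasDerivWithinAt) fun t ht => ?_
    rw [interior_Icc] at ht
    linarith [inner_gradient_add_smul_sub_le hlip x v ht.1.le]
  have h01 := hanti (Set.left_mem_Icc.2 zero_le_one) (Set.right_mem_Icc.2 zero_le_one) zero_le_one
  simp only [h, zero_smul, add_zero, one_smul, zero_mul, one_mul, one_pow, sub_zero,
    ne_eq, OfNat.ofNat_ne_zero, not_false_eq_true, zero_pow] at h01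
  linarith

variable {Ω : Type*} [MeasurableSpace Ω] {μ : Measure Ω} [IsProbabilityMeasure μ] {u : Ω → E}

lemma integral_norm_sub_integral_sq (hu : Integrable u μ) (hu₂ : Integrable (‖u ·‖ ^ 2) μ) :
    ∫ ω, ‖u ω - ∫ ω', u ω' ∂μ‖ ^ 2 ∂μ = ∫ ω, ‖u ω‖ ^ 2 ∂μ - ‖∫ ω, u ω ∂μ‖ ^ 2 := by
  set m := ∫ ω, u ω ∂μ
  have hinner : Integrable (fun ω => 2 * ⟪u ω, m⟫_ℝ) μ := (hu.inner_const m).const_mul 2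
  have hsub : Integrable (fun ω => ‖u ω‖ ^ 2 - 2 * ⟪u ω, m⟫_ℝ) μ := hu₂.sub hinner
  simp_rw [norm_sub_sq_real]
  rw [integral_add hsub (integrable_const _), integral_sub hu₂ hinner,
    integral_const_mul, integral_const, probReal_univ, one_smul]
  simp_rw [real_inner_comm m]
  rw [integral_inner hu, real_inner_self_eq_norm_sq]
  ring

lemma integral_apply_sub_smul_le (hf : Differentiable ℝ f)
    (hlip : ∀ x y, ‖∇ f x - ∇ f y‖ ≤ L * ‖x - y‖) (x : E) (γ : ℝ)
    (hu : Integrable u μ) (hu₂ : Integrable (‖u ·‖ ^ 2) μ)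
    (hfu : Integrable (fun ω => f (x - γ • u ω)) μ) :
    ∫ ω, f (x - γ • u ω) ∂μ ≤
      f x - γ * ⟪∇ f x, ∫ ω, u ω ∂μ⟫_ℝ + γ ^ 2 * L / 2 * ∫ ω, ‖u ω‖ ^ 2 ∂μ := by
  have hpointwise : ∀ ω, f (x - γ • u ω) ≤
      f x - γ * ⟪∇ f x, u ω⟫_ℝ + γ ^ 2 * L / 2 * ‖u ω‖ ^ 2 := fun ω => by
    convert apply_add_le_of_lipschitz_gradient hf hlip x (-(γ • u ω)) using 1
    · rw [sub_eq_add_neg]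
    · rw [inner_neg_right, real_inner_smul_right, norm_neg, norm_smul, mul_pow,
        Real.norm_eq_abs, sq_abs]
      ring
  have hlin : Integrable (fun ω => γ * ⟪∇ f x, u ω⟫_ℝ) μ := (hu.const_inner _).const_mul γ
  have hconst_sub : Integrable (fun ω => f x - γ * ⟪∇ f x, u ω⟫_ℝ) μ :=
    (integrable_const _).sub hlin
  have hquad : Integrable (fun ω => γ ^ 2 * L / 2 * ‖u ω‖ ^ 2) μ := hu₂.const_mul _
  have hbound : Integrable
      (fun ω => f x - γ * ⟪∇ f x, u ω⟫_ℝ + γ ^ 2 * L / 2 * ‖u ω‖ ^ 2) μ :=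
    hconst_sub.add hquad
  refine (integral_mono hfu hbound hpointwise).trans_eq ?_
  rw [integral_add hconst_sub hquad,
    integral_sub (integrable_const _) hlin, integral_const, probReal_univ, one_smul,
    integral_const_mul, integral_const_mul, integral_inner hu]

end Smooth

/-- Penultimate inequality in the proof of Lemma 1 of ProgFed, with the
explicit step-size-dependent contraction factor `(1 − γₜ L / (2α))`. -/
theorem progfed_penultimate (n : ℕ) (f : EuclideanSpace ℝ (Fin n) → ℝ)
    (L : ℝ) (hL : 0 ≤ L) (hdiff : Differentiable ℝ f)
    (hlip : ∀ x y, ‖gradient f x - gradient f y‖ ≤ L * ‖x - y‖)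
    (S : Finset (Fin n)) (Ω : Type*) [MeasurableSpace Ω]
    (μ : Measure Ω) [IsProbabilityMeasure μ]
    (g : Ω → EuclideanSpace ℝ (Fin n))
    (x : EuclideanSpace ℝ (Fin n)) (α σ γₜ : ℝ)
    (hg₁ : Integrable (fun ω => mask S (g ω)) μ)
    (hg₂ : Integrable (fun ω => ‖mask S (g ω)‖ ^ 2) μ)
    (hg₃ : Integrable (fun ω => f (x - γₜ • mask S (g ω))) μ)
    (d : EuclideanSpace ℝ (Fin n)) (hd : d = ∫ ω, mask S (g ω) ∂μ)
    (hvar : ∫ ω, ‖mask S (g ω) - d‖ ^ 2 ∂μ ≤ σ ^ 2)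
    (halign : (inner ℝ (mask S (gradient f x)) d : ℝ) ≥ α * ‖d‖ ^ 2)
    (hα : 0 < α) (hγₜ : 0 ≤ γₜ) :
    ∫ ω, f (x - γₜ • mask S (g ω)) ∂μ ≤
      f x - γₜ * α * (1 - γₜ * L / (2 * α)) * ‖d‖ ^ 2 +
        (γₜ ^ 2 * L / 2) * σ ^ 2 := by
  have hd_mask : mask S d = d := by
    rw [hd, ← integral_mask S hg₁]
    simp only [mask_mask]
  have hinner : α * ‖d‖ ^ 2 ≤ ⟪∇ f x, d⟫_ℝ :=
    calc α * ‖d‖ ^ 2 ≤ ⟪mask S (∇ f x), d⟫_ℝ := halign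
      _ = ⟪∇ f x, d⟫_ℝ := by rw [real_inner_mask_left, hd_mask]
  have hmoment : ∫ ω, ‖mask S (g ω)‖ ^ 2 ∂μ ≤ σ ^ 2 + ‖d‖ ^ 2 := by
    have hbias_variance := integral_norm_sub_integral_sq hg₁ hg₂
    rw [← hd] at hbias_variance
    linarith
  have hdesc := integral_apply_sub_smul_le hdiff hlip x γₜ hg₁ hg₂ hg₃
  rw [← hd] at hdesc
  calc ∫ ω, f (x - γₜ • mask S (g ω)) ∂μ
      ≤ f x - γₜ * ⟪∇ f x, d⟫_ℝ + γₜ ^ 2 * L / 2 * ∫ ω, ‖mask S (g ω)‖ ^ 2 ∂μ := hdesc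
    _ ≤ f x - γₜ * (α * ‖d‖ ^ 2) + γₜ ^ 2 * L / 2 * (σ ^ 2 + ‖d‖ ^ 2) := by gcongr
    _ = f x - γₜ * α * (1 - γₜ * L / (2 * α)) * ‖d‖ ^ 2 + (γₜ ^ 2 * L / 2) * σ ^ 2 := by
        field_simp
        ring
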